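/- arXiv:1607.03014 — 4 statements merged into one kernel-verified Lean document; each statement's English description precedes it below -/
import Mathlib

section
/- Let K be a strictly convex body in ℝ², and for each unit vector u write F(K,u) = {x_K(u)} and define the middle point m_K(u) = (x_K(u) + x_K(-u))/2. If (K_i) is a sequence of strictly convex bodies converging to K in the Hausdorff metric, then the middle hedgehogs M_{K_i} := {m_{K_i}(u) : u ∈ S¹} converge to M_K := {m_K(u) : u ∈ S¹} in the Hausdorff metric. -/
/-- The face of `K` in direction `v`. -/
def face (K : Set (EuclideanSpace ℝ (Fin 2))) (v : EuclideanSpace ℝ (Fin 2)) :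
    Set (EuclideanSpace ℝ (Fin 2)) :=
  {x | x ∈ K ∧ ∀ y ∈ K, (inner ℝ y v : ℝ) ≤ inner ℝ x v}

/-- The middle hedgehog of `K`: midpoints `(x_K(u) + x_K(-u))/2` over unit vectors `u`,
where the faces are singletons. -/
def middleHedgehog (K : Set (EuclideanSpace ℝ (Fin 2))) : Set (EuclideanSpace ℝ (Fin 2)) :=
  {m | ∃ u x y : EuclideanSpace ℝ (Fin 2), ‖u‖ = 1 ∧
    face K u = {x} ∧ face K (-u) = {y} ∧ m = (2⁻¹ : ℝ) • (x + y)}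

/-!
For a compact `K` with singleton faces, a compactness argument over the unit circle shows that
the points of `K` whose height in a unit direction `u` is within `δ` of the maximum form a set
whose diameter tends to `0` with `δ`, uniformly in `u`. If `L` is Hausdorff-`η`-close to `K`, the
point of `K` nearest to `x_L(u)` is such a `2η`-maximizer, so `x_L(u)` is uniformly close to
`x_K(u)`; the midpoints of `x(u)` and `x(-u)` then move no further.
-/

open Filter Metric Topology

local notation "ℝ²" => EuclideanSpace ℝ (Fin 2)

theorem inner_le_inner_add_dist {F : Type*} [NormedAddCommGroup F] [InnerProductSpace ℝ F]
    (a b : F) {u : F} (hu : ‖u‖ ≤ 1) : inner ℝ a u ≤ inner ℝ b u + dist a b := by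
  have h : inner ℝ (a - b) u ≤ ‖a - b‖ :=
    (real_inner_le_norm _ _).trans (mul_le_of_le_one_right (norm_nonneg _) hu)
  rw [inner_sub_left, ← dist_eq_norm] at h
  linarith

def approxFace (K : Set ℝ²) (v : ℝ²) (δ : ℝ) : Set ℝ² :=
  {x | x ∈ K ∧ ∀ y ∈ K, inner ℝ y v ≤ inner ℝ x v + δ}

theorem approxFace_mono {K : Set ℝ²} {v : ℝ²} {δ δ' : ℝ} (h : δ ≤ δ') :
    approxFace K v δ ⊆ approxFace K v δ' :=
  fun _ ⟨hx, hmax⟩ ↦ ⟨hx, fun y hy ↦ (hmax y hy).trans (by linarith)⟩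

theorem face_subset_approxFace {K : Set ℝ²} {v : ℝ²} {δ : ℝ} (hδ : 0 ≤ δ) :
    face K v ⊆ approxFace K v δ :=
  fun _ ⟨hx, hmax⟩ ↦ ⟨hx, fun y hy ↦ (hmax y hy).trans (by linarith)⟩

theorem mem_face_of_tendsto {ι : Type*} {l : Filter ι} [l.NeBot] {K : Set ℝ²} (hK : IsClosed K)
    {u : ι → ℝ²} {x : ι → ℝ²} {δ : ι → ℝ} {u₀ x₀ : ℝ²}
    (hu : Tendsto u l (𝓝 u₀)) (hx : Tendsto x l (𝓝 x₀)) (hδ : Tendsto δ l (𝓝 0))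
    (hmem : ∀ i, x i ∈ approxFace K (u i) (δ i)) : x₀ ∈ face K u₀ := by
  refine ⟨hK.mem_of_tendsto hx (.of_forall fun i ↦ (hmem i).1), fun y hy ↦ ?_⟩
  have hlim : Tendsto (fun i ↦ inner ℝ (x i) (u i) + δ i) l (𝓝 (inner ℝ x₀ u₀ + 0)) :=
    (hx.inner hu).add hδ
  rw [add_zero] at hlim
  exact le_of_tendsto_of_tendsto' (tendsto_const_nhds.inner hu) hlim fun i ↦ (hmem i).2 y hy

theorem exists_dist_le_of_mem_approxFace {K : Set ℝ²} (hK : IsCompact K)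
    (hstrict : ∀ v : ℝ², ‖v‖ = 1 → ∃ x, face K v = {x}) {ε : ℝ} (hε : 0 < ε) :
    ∃ δ > 0, ∀ u : ℝ², ‖u‖ = 1 →
      ∀ y ∈ approxFace K u δ, ∀ z ∈ approxFace K u δ, dist y z ≤ ε := by
  by_contra! hcon
  choose u hu y hy z hz hyz using fun n : ℕ ↦ hcon (1 / ((n : ℝ) + 1)) Nat.one_div_pos_of_nat
  have hmem : ∀ n, (u n, y n, z n) ∈ sphere (0 : ℝ²) 1 ×ˢ K ×ˢ K :=
    fun n ↦ ⟨mem_sphere_zero_iff_norm.mpr (hu n), (hy n).1, (hz n).1⟩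
  obtain ⟨⟨u₀, y₀, z₀⟩, ⟨hu₀, -⟩, φ, hφ, hlim⟩ :=
    ((isCompact_sphere 0 1).prod (hK.prod hK)).tendsto_subseq hmem
  have hu_lim : Tendsto (u ∘ φ) atTop (𝓝 u₀) := (continuous_fst.tendsto _).comp hlim
  have hy_lim : Tendsto (y ∘ φ) atTop (𝓝 y₀) := (continuous_snd.fst.tendsto _).comp hlim
  have hz_lim : Tendsto (z ∘ φ) atTop (𝓝 z₀) := (continuous_snd.snd.tendsto _).comp hlim
  have hδ_lim : Tendsto (fun n ↦ 1 / ((φ n : ℝ) + 1)) atTop (𝓝 0) :=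
    tendsto_one_div_add_atTop_nhds_zero_nat.comp hφ.tendsto_atTop
  obtain ⟨x₀, hx₀⟩ := hstrict u₀ (mem_sphere_zero_iff_norm.mp hu₀)
  have hy₀ : y₀ ∈ face K u₀ := mem_face_of_tendsto hK.isClosed hu_lim hy_lim hδ_lim (fun n ↦ hy (φ n))
  have hz₀ : z₀ ∈ face K u₀ := mem_face_of_tendsto hK.isClosed hu_lim hz_lim hδ_lim (fun n ↦ hz (φ n))
  rw [hx₀, Set.mem_singleton_iff] at hy₀ hz₀
  have hε_le : ε ≤ dist y₀ z₀ :=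
    ge_of_tendsto (hy_lim.dist hz_lim) (.of_forall fun n ↦ (hyz (φ n)).le)
  rw [hy₀, hz₀, dist_self] at hε_le
  linarith

theorem exists_mem_approxFace_of_mem_face {L K : Set ℝ²} (hLK : hausdorffEDist L K ≠ ⊤)
    {η : ℝ} (hη : hausdorffDist L K < η) {u : ℝ²} (hu : ‖u‖ = 1) {x : ℝ²} (hx : x ∈ face L u) :
    ∃ x' ∈ approxFace K u (2 * η), dist x x' < η := by
  obtain ⟨x', hx'K, hxx'⟩ := exists_dist_lt_of_hausdorffDist_lt hx.1 hη hLK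
  refine ⟨x', ⟨hx'K, fun w hw ↦ ?_⟩, hxx'⟩
  obtain ⟨w', hw'L, hww'⟩ := exists_dist_lt_of_hausdorffDist_lt' hw hη hLK
  calc inner ℝ w u ≤ inner ℝ w' u + dist w w' := inner_le_inner_add_dist w w' hu.le
    _ ≤ inner ℝ x' u + dist x x' + dist w w' := by
        gcongr; exact (hx.2 w' hw'L).trans (inner_le_inner_add_dist x x' hu.le)
    _ ≤ inner ℝ x' u + 2 * η := by rw [dist_comm] at hww'; linarith
theorem exists_dist_face_le_of_hausdorffDist_lt {K : Set ℝ²} (hK : IsCompact K)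
    (hstrict : ∀ v : ℝ², ‖v‖ = 1 → ∃ x, face K v = {x}) {ε : ℝ} (hε : 0 < ε) :
    ∃ η > 0, ∀ L : Set ℝ², hausdorffEDist L K ≠ ⊤ → hausdorffDist L K < η →
      ∀ u : ℝ², ‖u‖ = 1 → ∀ xL ∈ face L u, ∀ x ∈ face K u, dist xL x ≤ ε := by
  obtain ⟨δ, hδ, hclose⟩ := exists_dist_le_of_mem_approxFace hK hstrict (half_pos hε)
  refine ⟨min (δ / 2) (ε / 2), by positivity, fun L hLK hη u hu xL hxL x hx ↦ ?_⟩
  obtain ⟨x', hx', hxLx'⟩ := exists_mem_approxFace_of_mem_face hLK hη hu hxL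
  have h2η : 2 * min (δ / 2) (ε / 2) ≤ δ := by linarith [min_le_left (δ / 2) (ε / 2)]
  have hx'x : dist x' x ≤ ε / 2 :=
    hclose u hu x' (approxFace_mono h2η hx') x (face_subset_approxFace hδ.le hx)
  calc dist xL x ≤ dist xL x' + dist x' x := dist_triangle _ _ _
    _ ≤ ε := by linarith [min_le_right (δ / 2) (ε / 2)]

theorem exists_dist_le_of_mem_middleHedgehog {L K : Set ℝ²}
    (hK : ∀ v : ℝ², ‖v‖ = 1 → ∃ x, face K v = {x}) {ε : ℝ}
    (hface : ∀ u : ℝ², ‖u‖ = 1 → ∀ xL ∈ face L u, ∀ x ∈ face K u, dist xL x ≤ ε) :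
    ∀ m ∈ middleHedgehog L, ∃ m' ∈ middleHedgehog K, dist m m' ≤ ε := by
  rintro _ ⟨u, x, y, hu, hx, hy, rfl⟩
  have hu' : ‖-u‖ = 1 := by rwa [norm_neg]
  obtain ⟨x', hx'⟩ := hK u hu
  obtain ⟨y', hy'⟩ := hK (-u) hu'
  refine ⟨_, ⟨u, x', y', hu, hx', hy', rfl⟩, ?_⟩
  have hxx' := hface u hu x (hx ▸ rfl) x' (hx' ▸ rfl)
  have hyy' := hface (-u) hu' y (hy ▸ rfl) y' (hy' ▸ rfl)
  simp only [← invOf_eq_inv, ← midpoint_eq_smul_add]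
  linarith [dist_midpoint_midpoint_le x y x' y']

theorem hausdorffDist_middleHedgehog_le {L K : Set ℝ²}
    (hL : ∀ v : ℝ², ‖v‖ = 1 → ∃ x, face L v = {x})
    (hK : ∀ v : ℝ², ‖v‖ = 1 → ∃ x, face K v = {x}) {ε : ℝ} (hε : 0 ≤ ε)
    (hface : ∀ u : ℝ², ‖u‖ = 1 → ∀ xL ∈ face L u, ∀ x ∈ face K u, dist xL x ≤ ε) :
    hausdorffDist (middleHedgehog L) (middleHedgehog K) ≤ ε :=
  hausdorffDist_le_of_mem_dist hε (exists_dist_le_of_mem_middleHedgehog hK hface)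
    (exists_dist_le_of_mem_middleHedgehog hL fun u hu x hx xL hxL ↦
      dist_comm xL x ▸ hface u hu xL hxL x hx)

theorem middleHedgehog_continuous_general
    (K : Set (EuclideanSpace ℝ (Fin 2)))
    (hne : K.Nonempty) (hcpt : IsCompact K)
    (hstrict : ∀ v : EuclideanSpace ℝ (Fin 2), ‖v‖ = 1 → ∃ x, face K v = {x})
    (Ki : ℕ → Set (EuclideanSpace ℝ (Fin 2)))
    (hKi : ∀ i, (Ki i).Nonempty ∧ IsCompact (Ki i) ∧ Convex ℝ (Ki i) ∧
      (interior (Ki i)).Nonempty ∧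
      ∀ v : EuclideanSpace ℝ (Fin 2), ‖v‖ = 1 → ∃ x, face (Ki i) v = {x})
    (hlim : Filter.Tendsto (fun i => Metric.hausdorffDist (Ki i) K)
      Filter.atTop (nhds 0)) :
    Filter.Tendsto (fun i => Metric.hausdorffDist (middleHedgehog (Ki i)) (middleHedgehog K))
      Filter.atTop (nhds 0) := by
  refine tendsto_order.2
    ⟨fun a ha ↦ .of_forall fun _ ↦ ha.trans_le hausdorffDist_nonneg, fun ε hε ↦ ?_⟩
  obtain ⟨η, hη, hface⟩ := exists_dist_face_le_of_hausdorffDist_lt hcpt hstrict (half_pos hε)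
  filter_upwards [(tendsto_order.1 hlim).2 η hη] with i hi
  obtain ⟨hne_i, hcpt_i, -, -, hstrict_i⟩ := hKi i
  have hfin : hausdorffEDist (Ki i) K ≠ ⊤ :=
    hausdorffEDist_ne_top_of_nonempty_of_bounded hne_i hne hcpt_i.isBounded hcpt.isBounded
  exact (hausdorffDist_middleHedgehog_le hstrict_i hstrict (half_pos hε).le
    (hface (Ki i) hfin hi)).trans_lt (half_lt_self hε)

/-- If strictly convex bodies `K_i` converge to a strictly convex body `K` in the Hausdorff
metric, then their middle hedgehogs converge in the Hausdorff metric. -/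
theorem middleHedgehog_continuous
    (K : Set (EuclideanSpace ℝ (Fin 2)))
    (hne : K.Nonempty) (hcpt : IsCompact K) (hconv : Convex ℝ K)
    (hint : (interior K).Nonempty)
    (hstrict : ∀ v : EuclideanSpace ℝ (Fin 2), ‖v‖ = 1 → ∃ x, face K v = {x})
    (Ki : ℕ → Set (EuclideanSpace ℝ (Fin 2)))
    (hKi : ∀ i, (Ki i).Nonempty ∧ IsCompact (Ki i) ∧ Convex ℝ (Ki i) ∧
      (interior (Ki i)).Nonempty ∧
      ∀ v : EuclideanSpace ℝ (Fin 2), ‖v‖ = 1 → ∃ x, face (Ki i) v = {x})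
    (hlim : Filter.Tendsto (fun i => Metric.hausdorffDist (Ki i) K)
      Filter.atTop (nhds 0)) :
    Filter.Tendsto (fun i => Metric.hausdorffDist (middleHedgehog (Ki i)) (middleHedgehog K))
      Filter.atTop (nhds 0) :=
  middleHedgehog_continuous_general K hne hcpt hstrict Ki hKi hlim
end

section
/- Let K be a strictly convex body in ℝ². Its middle hedgehog M_K = {m_K(u) : u ∈ S¹} is a single point if and only if K is centrally symmetric (i.e. there exists z with K - z = z - K). -/
/-! If `K` is symmetric about `z`, the reflection `x ↦ 2z - x` maps the face of `K` in direction
`u` onto the face in direction `-u`, so every middle point equals `z`. Conversely, suppose every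
middle point equals `p` but the reflection `2p - k` of some `k ∈ K` lies outside `K`. Separate it
from `K` by a unit vector `v`. Since `x_K(v)` and `x_K(-v)` are reflections of each other about `p`,
the inequality `⟨x_K(-v), v⟩ ≤ ⟨k, v⟩` reflects to `⟨2p - k, v⟩ ≤ ⟨x_K(v), v⟩`, contradicting the
separation. -/

open Set Function Equiv

lemma Function.Involutive.image_eq_self_iff_mapsTo {α : Type*} {f : α → α} (hf : Involutive f)
    (s : Set α) : f '' s = s ↔ MapsTo f s s := by
  refine ⟨fun h => (mapsTo_image f s).mono_right h.subset, fun h => ?_⟩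
  exact h.image_subset.antisymm fun x hx => ⟨f x, h hx, hf x⟩

lemma image_sub_right_eq_image_sub_left_iff {G : Type*} [AddCommGroup G] (K : Set G) (z : G) :
    (fun x => x - z) '' K = (fun x => z - x) '' K ↔ MapsTo (pointReflection z) K K := by
  have hcomp : (fun x => z - x) = (fun x => x - z) ∘ pointReflection z := by
    funext x; simp only [comp_apply, pointReflection_apply, vsub_eq_sub, vadd_eq_add]; abel
  rw [hcomp, image_comp, (sub_left_injective (b := z)).image_injective.eq_iff, eq_comm,
    (pointReflection_involutive z).image_eq_self_iff_mapsTo]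

lemma inner_pointReflection_left {F : Type*} [NormedAddCommGroup F] [InnerProductSpace ℝ F]
    (p x v : F) : inner ℝ (pointReflection p x) v = 2 * inner ℝ p v - inner ℝ x v := by
  rw [pointReflection_apply, vsub_eq_sub, vadd_eq_add, inner_add_left, inner_sub_left]; ring

lemma exists_unit_inner_lt_of_notMem {F : Type*} [NormedAddCommGroup F] [InnerProductSpace ℝ F]
    [CompleteSpace F] {s : Set F} {w : F} (hne : s.Nonempty) (hconv : Convex ℝ s)
    (hclosed : IsClosed s) (hw : w ∉ s) :
    ∃ v : F, ‖v‖ = 1 ∧ ∀ a ∈ s, inner ℝ a v < inner ℝ w v := by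
  obtain ⟨f, c, hfs, hfw⟩ := geometric_hahn_banach_closed_point hconv hclosed hw
  set v := (InnerProductSpace.toDual ℝ F).symm f
  have hv : ∀ x, inner ℝ x v = f x := fun x => by
    rw [real_inner_comm]; exact InnerProductSpace.toDual_symm_apply
  have hv0 : v ≠ 0 := by
    intro h
    obtain ⟨a, ha⟩ := hne
    have := (hfs a ha).trans hfw
    rw [← hv, ← hv, h, inner_zero_right, inner_zero_right] at this
    exact this.false
  refine ⟨‖v‖⁻¹ • v, norm_smul_inv_norm hv0, fun a ha => ?_⟩
  simp only [real_inner_smul_right, hv]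
  exact mul_lt_mul_of_pos_left ((hfs a ha).trans hfw) (by positivity)

local notation "ℝ²" => EuclideanSpace ℝ (Fin 2)

lemma midpoint_mem_middleHedgehog {K : Set ℝ²} {u x y : ℝ²} (hu : ‖u‖ = 1)
    (hx : face K u = {x}) (hy : face K (-u) = {y}) : midpoint ℝ x y ∈ middleHedgehog K :=
  ⟨u, x, y, hu, hx, hy, by rw [midpoint_eq_smul_add, invOf_eq_inv]⟩

lemma middleHedgehog_nonempty {K : Set ℝ²} (hstrict : ∀ v : ℝ², ‖v‖ = 1 → ∃ x, face K v = {x}) :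
    (middleHedgehog K).Nonempty := by
  have hu : ‖EuclideanSpace.single (0 : Fin 2) (1 : ℝ)‖ = 1 := by simp
  obtain ⟨x, hx⟩ := hstrict _ hu
  obtain ⟨y, hy⟩ := hstrict _ (by rwa [norm_neg])
  exact ⟨_, midpoint_mem_middleHedgehog hu hx hy⟩

lemma pointReflection_mem_face_neg {K : Set ℝ²} {z u x : ℝ²}
    (hsymm : MapsTo (pointReflection z) K K) (hx : x ∈ face K u) :
    pointReflection z x ∈ face K (-u) := by
  refine ⟨hsymm hx.1, fun y hy => ?_⟩
  have := hx.2 _ (hsymm hy)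
  simp only [inner_neg_right, inner_pointReflection_left] at this ⊢
  linarith

lemma middleHedgehog_subset_singleton_of_mapsTo {K : Set ℝ²} {z : ℝ²}
    (hsymm : MapsTo (pointReflection z) K K) : middleHedgehog K ⊆ {z} := by
  rintro m ⟨u, x, y, -, hx, hy, rfl⟩
  have hxy := pointReflection_mem_face_neg hsymm (eq_singleton_iff_unique_mem.mp hx).1
  rw [hy] at hxy
  rw [← invOf_eq_inv, ← midpoint_eq_smul_add, mem_singleton_iff, midpoint_eq_iff']
  exact hxy

lemma mapsTo_pointReflection_of_middleHedgehog_subset {K : Set ℝ²} {p : ℝ²}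
    (hclosed : IsClosed K) (hconv : Convex ℝ K)
    (hstrict : ∀ v : ℝ², ‖v‖ = 1 → ∃ x, face K v = {x}) (hM : middleHedgehog K ⊆ {p}) :
    MapsTo (pointReflection p) K K := by
  intro k hk
  by_contra hw
  obtain ⟨v, hv, hsep⟩ := exists_unit_inner_lt_of_notMem ⟨k, hk⟩ hconv hclosed hw
  obtain ⟨x, hx⟩ := hstrict v hv
  obtain ⟨y, hy⟩ := hstrict (-v) (by rwa [norm_neg])
  have hxy : pointReflection p x = y :=
    (midpoint_eq_iff' ℝ).mp (hM (midpoint_mem_middleHedgehog hv hx hy))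
  have hxK : x ∈ K := (eq_singleton_iff_unique_mem.mp hx).1.1
  have hyk : inner ℝ y v ≤ inner ℝ k v := by
    have := (eq_singleton_iff_unique_mem.mp hy).1.2 k hk
    simpa only [inner_neg_right, neg_le_neg_iff] using this
  have hxw := hsep x hxK
  rw [← pointReflection_involutive p x, hxy, inner_pointReflection_left,
    inner_pointReflection_left] at hxw
  linarith

theorem middleHedgehog_singleton_iff_centrallySymmetric_general
    (K : Set (EuclideanSpace ℝ (Fin 2)))
    (hcpt : IsCompact K) (hconv : Convex ℝ K)
    (hstrict : ∀ v : EuclideanSpace ℝ (Fin 2), ‖v‖ = 1 → ∃ x, face K v = {x}) :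
    (∃ p, middleHedgehog K = {p}) ↔
      (∃ z : EuclideanSpace ℝ (Fin 2),
        (fun x => x - z) '' K = (fun x => z - x) '' K) := by
  simp only [image_sub_right_eq_image_sub_left_iff]
  constructor
  · rintro ⟨p, hp⟩
    exact ⟨p, mapsTo_pointReflection_of_middleHedgehog_subset hcpt.isClosed hconv hstrict
      hp.subset⟩
  · rintro ⟨z, hz⟩
    exact ⟨z, (middleHedgehog_nonempty hstrict).subset_singleton_iff.mp
      (middleHedgehog_subset_singleton_of_mapsTo hz)⟩

/-- The middle hedgehog of a strictly convex body is a single point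
iff the body is centrally symmetric. -/
theorem middleHedgehog_singleton_iff_centrallySymmetric
    (K : Set (EuclideanSpace ℝ (Fin 2)))
    (hne : K.Nonempty) (hcpt : IsCompact K) (hconv : Convex ℝ K)
    (hint : (interior K).Nonempty)
    (hstrict : ∀ v : EuclideanSpace ℝ (Fin 2), ‖v‖ = 1 → ∃ x, face K v = {x}) :
    (∃ p, middleHedgehog K = {p}) ↔
      (∃ z : EuclideanSpace ℝ (Fin 2),
        (fun x => x - z) '' K = (fun x => z - x) '' K) :=
  middleHedgehog_singleton_iff_centrallySymmetric_general K hcpt hconv hstrict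
end

section
/- The set of strictly convex bodies in ℝ² is a dense G_δ subset of the space of convex bodies in ℝ² equipped with the Hausdorff metric; in particular, a typical (Baire-generic) convex body in the plane is strictly convex. -/
/-!
The strictly convex bodies are the bodies with no flat chord of length at least `1 / (n + 1)`
for any `n`, a flat chord being one whose midpoint is not an interior point. Having a flat chord
of length at least `ρ` is a closed condition: the endpoints subconverge, Hausdorff limits of
points of bodies lie in the limit body, and an interior point of the limit body is eventually
interior to the nearby bodies, by convexity. This gives the `Gδ` part.

For density, a body `K ⊆ closedBall 0 R` is approximated within `ε` by the sublevel set
`{x | infDist x K + δ ‖x‖² ≤ δ R²}` with `δ = ε / R²`: it contains `K`, and it is strictly convex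
because `infDist · K` is convex, so the function defining it is strictly convex.
-/

open Metric Set Filter Topology RealInnerProductSpace

/-- The space of planar convex bodies: nonempty compact convex sets with nonempty
interior, with the Hausdorff metric. -/
def PlanarBody : Type :=
  {K : ConvexBody (EuclideanSpace ℝ (Fin 2)) //
    (interior (K : Set (EuclideanSpace ℝ (Fin 2)))).Nonempty}

noncomputable instance : MetricSpace PlanarBody :=
  Subtype.metricSpace

section Convexity

variable {E : Type*} [NormedAddCommGroup E] [NormedSpace ℝ E] {s : Set E}

theorem Convex.strictConvex_iff_midpoint_mem_interior (hs : Convex ℝ s) :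
    StrictConvex ℝ s ↔ ∀ x ∈ s, ∀ y ∈ s, x ≠ y → midpoint ℝ x y ∈ interior s := by
  refine ⟨fun h x hx y hy hxy => h.openSegment_subset hx hy hxy (midpoint_mem_openSegment x y),
    fun h => strictConvex_iff_openSegment_subset.2 fun x hx y hy hxy => ?_⟩
  have hm := h x hx y hy hxy
  refine (openSegment_subset_union x y ⟨1 / 2, lineMap_one_half x y⟩).trans ?_
  exact insert_subset hm (union_subset (hs.openSegment_self_interior_subset_interior hx hm)
    (hs.openSegment_interior_self_subset_interior hm hy))

def HasFlatChord (s : Set E) (ρ : ℝ) : Prop :=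
  ∃ x ∈ s, ∃ y ∈ s, ρ ≤ dist x y ∧ midpoint ℝ x y ∉ interior s

theorem Convex.strictConvex_iff_forall_not_hasFlatChord (hs : Convex ℝ s) :
    StrictConvex ℝ s ↔ ∀ n : ℕ, ¬HasFlatChord s (1 / (n + 1)) := by
  rw [hs.strictConvex_iff_midpoint_mem_interior]
  constructor
  · rintro h n ⟨x, hx, y, hy, hxy, hm⟩
    exact hm (h x hx y hy (dist_pos.1 (Nat.one_div_pos_of_nat.trans_le hxy)))
  · intro h x hx y hy hxy
    obtain ⟨n, hn⟩ := exists_nat_one_div_lt (dist_pos.2 hxy)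
    by_contra hm
    exact h n ⟨x, hx, y, hy, hn.le, hm⟩

theorem Convex.convexOn_infDist (hs : Convex ℝ s) : ConvexOn ℝ univ (infDist · s) := by
  rcases s.eq_empty_or_nonempty with rfl | hne
  · simpa using convexOn_const (0 : ℝ) convex_univ
  refine ⟨convex_univ, fun x _ y _ a b ha hb hab => le_of_forall_pos_le_add fun ε hε => ?_⟩
  obtain ⟨p, hp, hxp⟩ := (infDist_lt_iff hne).1 (lt_add_of_pos_right (infDist x s) hε)
  obtain ⟨q, hq, hyq⟩ := (infDist_lt_iff hne).1 (lt_add_of_pos_right (infDist y s) hε)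
  calc infDist (a • x + b • y) s ≤ dist (a • x + b • y) (a • p + b • q) :=
        infDist_le_dist_of_mem (hs hp hq ha hb hab)
    _ ≤ a * dist x p + b * dist y q := by
        rw [dist_eq_norm, dist_eq_norm, dist_eq_norm,
          show a • x + b • y - (a • p + b • q) = a • (x - p) + b • (y - q) by module]
        refine (norm_add_le _ _).trans_eq ?_
        rw [norm_smul, norm_smul, Real.norm_of_nonneg ha, Real.norm_of_nonneg hb]
    _ ≤ a * (infDist x s + ε) + b * (infDist y s + ε) := by gcongr
    _ = a • infDist x s + b • infDist y s + ε := by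
        rw [smul_eq_mul, smul_eq_mul]
        linear_combination ε * hab

end Convexity

theorem StrictConvexOn.strictConvex_setOf_le {E : Type*} [AddCommGroup E] [Module ℝ E]
    [TopologicalSpace E] {f : E → ℝ} (hf : StrictConvexOn ℝ univ f) (hfc : Continuous f)
    (r : ℝ) : StrictConvex ℝ {x | f x ≤ r} := by
  intro x hx y hy hxy a b ha hb hab
  have hlt : f (a • x + b • y) < r := calc
    f (a • x + b • y) < a • f x + b • f y := hf.2 trivial trivial hxy ha hb hab
    _ ≤ a • r + b • r := by gcongr <;> assumption
    _ = r := by rw [← add_smul, hab, one_smul]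
  exact interior_maximal (fun z hz => le_of_lt hz) (isOpen_lt hfc continuous_const) hlt

section InnerProductSpace

variable {E : Type*} [NormedAddCommGroup E] [InnerProductSpace ℝ E]

theorem Convex.mem_of_closedBall_subset_thickening [CompleteSpace E] {L : Set E}
    (hL : Convex ℝ L) (hLc : IsClosed L) {z : E} {s : ℝ} (hs : 0 ≤ s)
    (h : closedBall z s ⊆ Metric.thickening s L) : z ∈ L := by
  by_contra hz
  have hne : L.Nonempty := by
    obtain ⟨p, hp, -⟩ := mem_thickening_iff.1 (h (mem_closedBall_self hs))
    exact ⟨p, hp⟩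
  obtain ⟨w, hw, hmin⟩ := exists_norm_eq_iInf_of_complete_convex hne hLc.isComplete hL z
  have hobtuse := (norm_eq_iInf_iff_real_inner_le_zero hL hw).1 hmin
  have hd : 0 < ‖z - w‖ := norm_pos_iff.2 (sub_ne_zero.2 fun h => hz (h ▸ hw))
  set q := z + (s / ‖z - w‖) • (z - w)
  have hq : dist q z = s := by
    simp [q, norm_smul, abs_of_nonneg hs, hd.ne']
  obtain ⟨p, hp, hqp⟩ := mem_thickening_iff.1 (h (mem_closedBall.2 hq.le))
  -- `q` lies at distance `s` beyond `z` along the outer normal `z - w` to `L` at `w`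
  have hlow : ‖z - w‖ ^ 2 + s * ‖z - w‖ ≤ ⟪z - w, q - p⟫ := by
    have : q - p = (1 + s / ‖z - w‖) • (z - w) - (p - w) := by simp only [q]; module
    rw [this, inner_sub_right, real_inner_smul_right, real_inner_self_eq_norm_sq]
    have := hobtuse p hp
    field_simp
    nlinarith
  have hup : ⟪z - w, q - p⟫ < ‖z - w‖ * s :=
    calc ⟪z - w, q - p⟫ ≤ ‖z - w‖ * ‖q - p‖ := real_inner_le_norm _ _
      _ < ‖z - w‖ * s := mul_lt_mul_of_pos_left (by rwa [← dist_eq_norm]) hd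
  nlinarith

namespace ConvexBody

theorem subset_thickening_of_dist_lt {K L : ConvexBody E} {r : ℝ} (h : dist K L < r) :
    (K : Set E) ⊆ thickening r (L : Set E) := fun _ hx =>
  (mem_thickening_iff_infDist_lt L.nonempty).2 <|
    (infDist_le_hausdorffDist_of_mem hx hausdorffEDist_ne_top).trans_lt
      (by rwa [hausdorffDist_coe])

variable {ι : Type*} {l : Filter ι} {K : ι → ConvexBody E} {K₀ : ConvexBody E} {x : ι → E}
  {x₀ : E}

theorem mem_of_tendsto [l.NeBot] (hK : Tendsto K l (𝓝 K₀)) (hx : Tendsto x l (𝓝 x₀))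
    (hmem : ∀ᶠ i in l, x i ∈ K i) : x₀ ∈ K₀ := by
  have hdist : ∀ᶠ i in l, infDist (x i) K₀ ≤ dist (K i) K₀ := by
    filter_upwards [hmem] with i hi
    rw [← hausdorffDist_coe]
    exact infDist_le_hausdorffDist_of_mem hi hausdorffEDist_ne_top
  have h₀ : infDist x₀ K₀ ≤ 0 :=
    le_of_tendsto_of_tendsto (((continuous_infDist_pt _).tendsto x₀).comp hx)
      (tendsto_iff_dist_tendsto_zero.1 hK) hdist
  exact (K₀.isCompact.isClosed.mem_iff_infDist_zero K₀.nonempty).2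
    (le_antisymm h₀ infDist_nonneg)

theorem eventually_mem_interior_of_tendsto [CompleteSpace E] (hK : Tendsto K l (𝓝 K₀))
    (hx : Tendsto x l (𝓝 x₀)) (h : x₀ ∈ interior K₀) : ∀ᶠ i in l, x i ∈ interior (K i) := by
  obtain ⟨ε, hε, hball⟩ := Metric.mem_nhds_iff.1 (mem_interior_iff_mem_nhds.1 h)
  obtain ⟨r, hr, hrε⟩ : ∃ r, 0 < r ∧ 3 * r < ε := ⟨ε / 4, by positivity, by linarith⟩
  filter_upwards [hK (ball_mem_nhds K₀ hr), hx (ball_mem_nhds x₀ hr)] with i hKi hxi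
  replace hxi : dist (x i) x₀ < r := hxi
  have hsub : ball (x i) r ⊆ K i := fun p hp =>
    (K i).convex.mem_of_closedBall_subset_thickening (K i).isCompact.isClosed hr.le
      fun q hq => subset_thickening_of_dist_lt (by rw [dist_comm]; exact hKi) <| hball <| by
        rw [mem_closedBall] at hq
        rw [mem_ball] at hp ⊢
        calc dist q x₀ ≤ dist q p + dist p (x i) + dist (x i) x₀ := dist_triangle4 _ _ _ _
          _ < ε := by linarith
  exact interior_maximal hsub isOpen_ball (mem_ball_self hr)

variable [ProperSpace E]

theorem isClosed_setOf_hasFlatChord (ρ : ℝ) :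
    IsClosed {K : ConvexBody E | HasFlatChord (K : Set E) ρ} := by
  refine IsSeqClosed.isClosed fun K K₀ hflat hK => ?_
  choose x hx y hy hρ hm using hflat
  have hC : ∀ᶠ n in atTop, (x n, y n) ∈ cthickening 1 (K₀ : Set E) ×ˢ cthickening 1 K₀ := by
    filter_upwards [hK (ball_mem_nhds K₀ one_pos)] with n hn
    have hKn := (subset_thickening_of_dist_lt hn).trans (thickening_subset_cthickening _ _)
    exact ⟨hKn (hx n), hKn (hy n)⟩
  obtain ⟨⟨x₀, y₀⟩, -, φ, hφ, hlim⟩ :=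
    (K₀.isCompact.cthickening.prod K₀.isCompact.cthickening).tendsto_subseq' hC.frequently
  have hKφ := hK.comp hφ.tendsto_atTop
  have hxφ : Tendsto (x ∘ φ) atTop (𝓝 x₀) := (continuous_fst.tendsto _).comp hlim
  have hyφ : Tendsto (y ∘ φ) atTop (𝓝 y₀) := (continuous_snd.tendsto _).comp hlim
  refine ⟨x₀, mem_of_tendsto hKφ hxφ (.of_forall fun n => hx (φ n)),
    y₀, mem_of_tendsto hKφ hyφ (.of_forall fun n => hy (φ n)),
    ge_of_tendsto (hxφ.dist hyφ) (.of_forall fun n => hρ (φ n)), fun hm₀ => ?_⟩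
  obtain ⟨n, hn⟩ := (eventually_mem_interior_of_tendsto hKφ (hxφ.midpoint hyφ) hm₀).exists
  exact hm (φ n) hn

theorem isGδ_setOf_strictConvex : IsGδ {K : ConvexBody E | StrictConvex ℝ (K : Set E)} := by
  have : {K : ConvexBody E | StrictConvex ℝ (K : Set E)} =
      ⋂ n : ℕ, {K : ConvexBody E | HasFlatChord (K : Set E) (1 / (n + 1))}ᶜ := by
    ext K
    simp [K.convex.strictConvex_iff_forall_not_hasFlatChord]
  rw [this]
  exact .iInter_of_isOpen fun n => (isClosed_setOf_hasFlatChord _).isOpen_compl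

theorem exists_strictConvex_superset_dist_le (K : ConvexBody E) {ε : ℝ} (hε : 0 < ε) :
    ∃ L : ConvexBody E, (K : Set E) ⊆ L ∧ StrictConvex ℝ (L : Set E) ∧ dist L K ≤ ε := by
  obtain ⟨R, hR, hKR⟩ := K.isBounded.subset_closedBall_lt 0 0
  set δ := ε / R ^ 2
  have hδ : 0 < δ := by positivity
  set f : E → ℝ := fun x => infDist x K + δ * ‖x‖ ^ 2
  have hf : StrictConvexOn ℝ univ f := by
    refine StrongConvexOn.strictConvexOn (m := 2 * δ) ?_ (by positivity)
    refine strongConvexOn_iff_convex.2 (K.convex.convexOn_infDist.congr fun x _ => ?_)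
    simp only [f]
    ring
  have hfc : Continuous f := by fun_prop
  set B := {x | f x ≤ δ * R ^ 2}
  have hKB : (K : Set E) ⊆ B := fun x hx => by
    have hxR := mem_closedBall_zero_iff.1 (hKR hx)
    show infDist x K + δ * ‖x‖ ^ 2 ≤ δ * R ^ 2
    rw [infDist_zero_of_mem hx, zero_add]
    gcongr
  have hB : ∀ x ∈ B, infDist x K ≤ ε ∧ ‖x‖ ≤ R := fun x hx => by
    have hx' : infDist x K + δ * ‖x‖ ^ 2 ≤ δ * R ^ 2 := hx
    have hδR : δ * R ^ 2 = ε := div_mul_cancel₀ ε (by positivity)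
    have hd : 0 ≤ infDist x K := infDist_nonneg
    have hxR : ‖x‖ ^ 2 ≤ R ^ 2 := le_of_mul_le_mul_left (by linarith) hδ
    exact ⟨by nlinarith, (pow_le_pow_iff_left₀ (norm_nonneg x) hR.le two_ne_zero).1 hxR⟩
  have hBs := hf.strictConvex_setOf_le hfc (δ * R ^ 2)
  refine ⟨⟨B, hBs.convex, (isCompact_closedBall 0 R).of_isClosed_subset
    (isClosed_le hfc continuous_const) fun x hx => mem_closedBall_zero_iff.2 (hB x hx).2,
    K.nonempty.mono hKB⟩, hKB, hBs, ?_⟩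
  rw [← hausdorffDist_coe]
  exact hausdorffDist_le_of_infDist hε.le (fun x hx => (hB x hx).1)
    fun x hx => (infDist_zero_of_mem (hKB hx)).trans_le hε.le

end ConvexBody

end InnerProductSpace

/-- The strictly convex bodies form a dense `Gδ` subset of the space of planar
convex bodies; in particular a typical planar convex body is strictly convex. -/
theorem strictlyConvex_dense_Gdelta :
    IsGδ {K : PlanarBody | StrictConvex ℝ (K.1 : Set (EuclideanSpace ℝ (Fin 2)))} ∧
    Dense {K : PlanarBody | StrictConvex ℝ (K.1 : Set (EuclideanSpace ℝ (Fin 2)))} := by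
  refine ⟨ConvexBody.isGδ_setOf_strictConvex.preimage continuous_subtype_val,
    Metric.dense_iff.2 fun K r hr => ?_⟩
  obtain ⟨L, hKL, hL, hLK⟩ := K.1.exists_strictConvex_superset_dist_le (half_pos hr)
  exact ⟨⟨L, K.2.mono (interior_mono hKL)⟩, mem_ball.2 (hLK.trans_lt (half_lt_self hr)), hL⟩
end

section
/- For each k ∈ ℕ, the set A_k of strictly convex bodies K in ℝ² such that the convex hull of the middle hedgehog M_K has at most k exposed points is closed in the space of strictly convex bodies with the Hausdorff metric. -/
/-- The space of strictly convex planar bodies with the Hausdorff metric. -/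
def StrictBody : Type :=
  {K : ConvexBody (EuclideanSpace ℝ (Fin 2)) //
    (interior (K : Set (EuclideanSpace ℝ (Fin 2)))).Nonempty ∧
    StrictConvex ℝ (K : Set (EuclideanSpace ℝ (Fin 2)))}

noncomputable instance : MetricSpace StrictBody :=
  Subtype.metricSpace

/-!
The number of exposed points of `convexHull ℝ M` is lower semicontinuous in the compact set `M`
for the Hausdorff distance: if `e` is exposed, take a centre `z` far out on the inner normal at
`e`; the farthest points from `z` of any compact set close to `M` are exposed points of its hull,
and they lie close to `e`. For strictly convex `K` the support point `x_K(u)` is the unique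
maximiser of `⟪·, u⟫` on `K`, so by Berge's maximum theorem it depends continuously on `(K, u)`.
Hence the middle hedgehog, the image of the unit circle under `u ↦ (x_K(u) + x_K(-u)) / 2`,
depends continuously on `K`, and `A_k` is a sublevel set of a lower semicontinuous function.
-/

open Filter Set Metric Function
open scoped Topology RealInnerProductSpace ENNReal

theorem LowerHemicontinuous.lowerSemicontinuous_encard {α β : Type*} [TopologicalSpace α]
    [TopologicalSpace β] [T2Space β] {f : α → Set β} (hf : LowerHemicontinuous f) :
    LowerSemicontinuous fun x => (f x).encard := by
  intro x m hm
  obtain ⟨T, hTf, hTcard⟩ := exists_subset_encard_eq (Order.add_one_le_of_lt hm)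
  have hT : T.Finite := encard_ne_top_iff.1 <| by simp [hTcard, hm.ne_top]
  obtain ⟨U, hU, hdisj⟩ := hT.t2_separation
  have hnear : ∀ᶠ x' in 𝓝 x, ∀ t ∈ T, (f x' ∩ U t).Nonempty :=
    hT.eventually_all.2 fun t ht =>
      lowerHemicontinuousAt_iff.1 (hf x) (U t) (hU t).2 ⟨t, hTf ht, (hU t).1⟩
  filter_upwards [hnear] with x' hx'
  choose! g hgf hgU using hx'
  calc m < m + 1 := (ENat.lt_add_one_iff hm.ne_top).2 le_rfl
    _ = T.encard := hTcard.symm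
    _ ≤ (f x').encard := encard_le_encard_of_injOn hgf fun s hs t ht hst =>
        hdisj.elim hs ht (not_disjoint_iff.2 ⟨g s, hgU s hs, hst ▸ hgU t ht⟩)

section HausdorffLimit

variable {ι E : Type*} {L : Filter ι} {A : ι → Set E} {A₀ : Set E}

theorem mem_of_tendsto_of_tendsto_hausdorffEDist [PseudoEMetricSpace E] [L.NeBot]
    (hA₀ : IsClosed A₀) (hA : Tendsto (fun i => hausdorffEDist (A i) A₀) L (𝓝 0))
    {p : ι → E} (hp : ∀ᶠ i in L, p i ∈ A i) {q : E} (hq : Tendsto p L (𝓝 q)) : q ∈ A₀ := by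
  refine (mem_iff_infEDist_zero_of_closed hA₀).2 (le_antisymm ?_ bot_le)
  refine le_of_tendsto_of_tendsto ((continuous_infEDist.tendsto q).comp hq) hA ?_
  filter_upwards [hp] with i hi using infEDist_le_hausdorffEDist_of_mem hi

theorem exists_tendsto_of_tendsto_hausdorffEDist [PseudoEMetricSpace E]
    (hA : ∀ i, IsCompact (A i)) (hAne : ∀ i, (A i).Nonempty)
    (hd : Tendsto (fun i => hausdorffEDist (A i) A₀) L (𝓝 0)) {y : E} (hy : y ∈ A₀) :
    ∃ y' : ι → E, (∀ i, y' i ∈ A i) ∧ Tendsto y' L (𝓝 y) := by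
  choose y' hy'A hy'd using fun i => (hA i).exists_infEDist_eq_edist (hAne i) y
  refine ⟨y', hy'A, tendsto_iff_edist_tendsto_0.2 <|
    tendsto_of_tendsto_of_tendsto_of_le_of_le tendsto_const_nhds hd (fun _ => zero_le)
      fun i => ?_⟩
  calc edist (y' i) y = infEDist y (A i) := by rw [edist_comm, hy'd]
    _ ≤ hausdorffEDist A₀ (A i) := infEDist_le_hausdorffEDist_of_mem hy
    _ = hausdorffEDist (A i) A₀ := hausdorffEDist_comm

variable {X : Type*} [TopologicalSpace X] [MetricSpace E] [ProperSpace E]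

/-- Upper hemicontinuity in Berge's maximum theorem. -/
theorem tendsto_nhdsSet_isMaxOn_of_tendsto_hausdorffEDist {F : X → E → ℝ}
    (hF : Continuous (uncurry F)) {x : ι → X} {x₀ : X} (hx : Tendsto x L (𝓝 x₀))
    (hA₀ : IsCompact A₀) (hA : ∀ i, IsCompact (A i))
    (hd : Tendsto (fun i => hausdorffEDist (A i) A₀) L (𝓝 0))
    {p : ι → E} (hp : ∀ i, p i ∈ A i) (hpmax : ∀ i, IsMaxOn (F (x i)) (A i) (p i)) :
    Tendsto p L (𝓝ˢ {q ∈ A₀ | IsMaxOn (F x₀) A₀ q}) := by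
  have hclose : ∀ᶠ i in L, p i ∈ cthickening 1 A₀ := by
    filter_upwards [(tendsto_order.1 hd).2 1 (by simp)] with i hi
    exact mem_cthickening_iff.2 <| by
      simpa using (infEDist_le_hausdorffEDist_of_mem (hp i)).trans hi.le
  refine (hA₀.cthickening (r := 1)).tendsto_nhdsSet_of_mapClusterPt hclose fun q _ hq => ?_
  obtain ⟨U, hUL, hpq⟩ := mapClusterPt_iff_ultrafilter.1 hq
  refine ⟨mem_of_tendsto_of_tendsto_hausdorffEDist hA₀.isClosed (hd.mono_left hUL)
    (Eventually.of_forall hp) hpq, fun y hy => ?_⟩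
  obtain ⟨y', hy'A, hy'⟩ := exists_tendsto_of_tendsto_hausdorffEDist hA
    (fun i => ⟨p i, hp i⟩) hd hy
  have hxU := hx.mono_left hUL
  exact le_of_tendsto_of_tendsto' ((hF.tendsto _).comp (hxU.prodMk_nhds (hy'.mono_left hUL)))
    ((hF.tendsto _).comp (hxU.prodMk_nhds hpq)) fun i => hpmax i (hy'A i)

end HausdorffLimit

section Exposed

variable {E : Type*} [NormedAddCommGroup E] [InnerProductSpace ℝ E]

theorem sq_norm_sub_le_of_norm_sub_le {y p z : E} (h : ‖y - z‖ ≤ ‖p - z‖) :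
    ‖y - p‖ ^ 2 ≤ 2 * (⟪p - z, p⟫ - ⟪p - z, y⟫) := by
  have hyp : y - p = (y - z) - (p - z) := by abel
  have hinner : ⟪p - z, p⟫ - ⟪p - z, y⟫ = ‖p - z‖ ^ 2 - ⟪y - z, p - z⟫ := by
    rw [← inner_sub_right, real_inner_comm, ← real_inner_self_eq_norm_sq, ← inner_sub_left]
    congr 1; abel
  rw [hyp, norm_sub_sq_real, hinner]
  nlinarith [norm_nonneg (y - z)]

/-- The hull lies in the ball about `z` through `p`, which the hyperplane orthogonal to `p - z`
supports only at `p`. -/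
theorem mem_exposedPoints_convexHull_of_isMaxOn_dist {S : Set E} {p z : E} (hp : p ∈ S)
    (hmax : IsMaxOn (dist · z) S p) : p ∈ (convexHull ℝ S).exposedPoints ℝ := by
  have hball : convexHull ℝ S ⊆ closedBall z (dist p z) :=
    convexHull_min (fun y hy => mem_closedBall.2 (hmax hy)) (convex_closedBall _ _)
  refine ⟨subset_convexHull ℝ S hp, innerSL ℝ (p - z), fun y hy => ?_⟩
  have hle := sq_norm_sub_le_of_norm_sub_le (y := y) (p := p) (z := z) <| by
    simpa [dist_eq_norm] using hball hy
  simp only [innerSL_apply_apply]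
  refine ⟨by nlinarith [sq_nonneg ‖y - p‖], fun h => ?_⟩
  rw [← sub_eq_zero, ← norm_eq_zero, ← sq_eq_zero_iff]
  linarith [sq_nonneg ‖y - p‖]

/-- Take `z = e - t • w` with `w` the normal of the hyperplane exposing `e`: the points of `M`
at distance `≥ ε` from `e` lie below that hyperplane by a margin `γ`, and for large `t` this
margin brings them closer to `z` than `e` is. -/
theorem exists_forall_isMaxOn_dist_lt [CompleteSpace E] {M : Set E} (hM : IsCompact M) {e : E}
    (he : e ∈ (convexHull ℝ M).exposedPoints ℝ) {ε : ℝ} (hε : 0 < ε) :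
    ∃ z, ∀ y ∈ M, IsMaxOn (dist · z) M y → dist y e < ε := by
  have heM : e ∈ M := extremePoints_convexHull_subset (exposedPoints_subset_extremePoints he)
  obtain ⟨-, l, hl⟩ := he
  obtain ⟨γ, hγ, hgap⟩ : ∃ γ > 0, ∀ y ∈ M ∩ {y | ε ≤ dist y e}, γ ≤ l e - l y := by
    have hK : IsCompact (M ∩ {y | ε ≤ dist y e}) :=
      hM.inter_right (isClosed_le (by fun_prop) (by fun_prop))
    refine hK.exists_forall_le' (by fun_prop) fun y ⟨hyM, (hyd : ε ≤ dist y e)⟩ => sub_pos.2 ?_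
    refine (hl y (subset_convexHull ℝ M hyM)).1.lt_of_ne fun h => ?_
    rw [(hl y (subset_convexHull ℝ M hyM)).2 h.ge, dist_self] at hyd
    linarith
  obtain ⟨ρ, hρ⟩ := hM.isBounded.subset_closedBall e
  set w := (InnerProductSpace.toDual ℝ E).symm l
  have hw : ∀ x, ⟪w, x⟫ = l x := fun x => InnerProductSpace.toDual_symm_apply
  set t := ρ ^ 2 / γ + 1 with ht
  have htγ : t * γ = ρ ^ 2 + γ := by rw [ht]; field_simp
  refine ⟨e - t • w, fun y hyM hmax => not_le.1 fun hyd => ?_⟩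
  have hye : ‖y - e‖ ^ 2 ≤ ρ ^ 2 :=
    pow_le_pow_left₀ (norm_nonneg _) (by simpa [dist_eq_norm] using hρ hyM) 2
  have hfar : ‖e - (e - t • w)‖ ^ 2 ≤ ‖y - (e - t • w)‖ ^ 2 := by
    simpa [dist_eq_norm] using pow_le_pow_left₀ dist_nonneg (hmax heM) 2
  have hexpand : y - (e - t • w) = (y - e) + t • w := by abel
  rw [hexpand, norm_add_sq_real, real_inner_smul_right, real_inner_comm, hw, map_sub,
    sub_sub_cancel] at hfar
  nlinarith [hgap y ⟨hyM, hyd⟩]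

theorem eventually_exposedPoints_convexHull_inter_nonempty [ProperSpace E] {ι : Type*}
    {L : Filter ι} {M : ι → Set E} {M₀ : Set E} (hM₀ : IsCompact M₀)
    (hM : ∀ i, IsCompact (M i)) (hMne : ∀ i, (M i).Nonempty)
    (hd : Tendsto (fun i => hausdorffEDist (M i) M₀) L (𝓝 0)) {U : Set E} (hU : IsOpen U)
    (he : ((convexHull ℝ M₀).exposedPoints ℝ ∩ U).Nonempty) :
    ∀ᶠ i in L, ((convexHull ℝ (M i)).exposedPoints ℝ ∩ U).Nonempty := by
  obtain ⟨e, he, heU⟩ := he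
  obtain ⟨ε, hε, hball⟩ := Metric.isOpen_iff.1 hU e heU
  obtain ⟨z, hz⟩ := exists_forall_isMaxOn_dist_lt hM₀ he hε
  choose q hqM hqmax using fun i =>
    (hM i).exists_isMaxOn (hMne i) (continuous_id.dist continuous_const).continuousOn
  have hq := tendsto_nhdsSet_isMaxOn_of_tendsto_hausdorffEDist (F := fun z y => dist y z)
    (by fun_prop) (tendsto_const_nhds (x := z)) hM₀ hM hd hqM hqmax
  filter_upwards [hq (hU.mem_nhdsSet.2 fun y ⟨hy, hmax⟩ => hball (mem_ball.2 (hz y hy hmax)))]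
    with i hi using ⟨q i, mem_exposedPoints_convexHull_of_isMaxOn_dist (hqM i) (hqmax i), hi⟩

end Exposed

/-- The midpoint would be an interior maximum of `l`, forcing `l = 0`. -/
theorem StrictConvex.eq_of_isMaxOn {E : Type*} [NormedAddCommGroup E] [NormedSpace ℝ E]
    {A : Set E} (hA : StrictConvex ℝ A) {l : StrongDual ℝ E} (hl : l ≠ 0) {x y : E}
    (hx : x ∈ A) (hy : y ∈ A) (hlx : IsMaxOn l A x) (hly : IsMaxOn l A y) : x = y := by
  by_contra hxy
  have hmid := hA hx hy hxy (by norm_num : (0 : ℝ) < 2⁻¹) (by norm_num : (0 : ℝ) < 2⁻¹)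
    (by norm_num)
  have hmax : IsMaxOn l A ((2⁻¹ : ℝ) • x + (2⁻¹ : ℝ) • y) := isMaxOn_iff.2 fun z hz => by
    have := isMaxOn_iff.1 hlx z hz
    have := isMaxOn_iff.1 hly z hz
    simp only [map_add, map_smul, smul_eq_mul]
    linarith
  exact hl ((hmax.isLocalMax (mem_interior_iff_mem_nhds.1 hmid)).hasFDerivAt_eq_zero
    l.hasFDerivAt)

local notation "𝔼" => EuclideanSpace ℝ (Fin 2)

theorem mem_face_iff {A : Set 𝔼} {u x : 𝔼} :
    x ∈ face A u ↔ x ∈ A ∧ IsMaxOn (innerSL ℝ u) A x := by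
  simp only [face, mem_ofPred_eq, isMaxOn_iff, innerSL_apply_apply, real_inner_comm u]

theorem StrictConvex.subsingleton_face {A : Set 𝔼} (hA : StrictConvex ℝ A) {u : 𝔼}
    (hu : u ≠ 0) : (face A u).Subsingleton := fun x hx y hy =>
  hA.eq_of_isMaxOn (by rwa [ne_eq, ← norm_eq_zero, innerSL_apply_norm, norm_eq_zero])
    (mem_face_iff.1 hx).1 (mem_face_iff.1 hy).1 (mem_face_iff.1 hx).2 (mem_face_iff.1 hy).2

/-- Junk unless `face A u` is nonempty, e.g. for compact nonempty `A`. -/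
noncomputable def supportPoint (A : Set 𝔼) (u : 𝔼) : 𝔼 :=
  Classical.epsilon (· ∈ face A u)

noncomputable def hedgehogPoint (A : Set 𝔼) (u : 𝔼) : 𝔼 :=
  (2⁻¹ : ℝ) • (supportPoint A u + supportPoint A (-u))

section SupportPoint

variable {A : Set 𝔼}

theorem supportPoint_mem_face (hA : IsCompact A) (hAne : A.Nonempty) (u : 𝔼) :
    supportPoint A u ∈ face A u := by
  obtain ⟨x, hx, hmax⟩ := hA.exists_isMaxOn hAne (innerSL ℝ u).continuous.continuousOn
  exact Classical.epsilon_spec ⟨x, mem_face_iff.2 ⟨hx, hmax⟩⟩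

theorem face_eq_singleton_supportPoint (hA : IsCompact A) (hAne : A.Nonempty)
    (hAs : StrictConvex ℝ A) {u : 𝔼} (hu : u ≠ 0) : face A u = {supportPoint A u} :=
  (hAs.subsingleton_face hu).eq_singleton_of_mem (supportPoint_mem_face hA hAne u)

theorem middleHedgehog_eq_image (hA : IsCompact A) (hAne : A.Nonempty)
    (hAs : StrictConvex ℝ A) : middleHedgehog A = hedgehogPoint A '' sphere 0 1 := by
  ext m
  simp only [middleHedgehog, hedgehogPoint, mem_ofPred_eq, mem_image, mem_sphere_zero_iff_norm]
  constructor
  · rintro ⟨u, x, y, hu, hx, hy, rfl⟩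
    have hu0 : u ≠ 0 := by rintro rfl; simp at hu
    rw [face_eq_singleton_supportPoint hA hAne hAs hu0, singleton_eq_singleton_iff] at hx
    rw [face_eq_singleton_supportPoint hA hAne hAs (neg_ne_zero.2 hu0),
      singleton_eq_singleton_iff] at hy
    exact ⟨u, hu, by rw [hx, hy]⟩
  · rintro ⟨u, hu, rfl⟩
    have hu0 : u ≠ 0 := by rintro rfl; simp at hu
    exact ⟨u, _, _, hu, face_eq_singleton_supportPoint hA hAne hAs hu0,
      face_eq_singleton_supportPoint hA hAne hAs (neg_ne_zero.2 hu0), rfl⟩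

theorem middleHedgehog_nonempty_s16 (hA : IsCompact A) (hAne : A.Nonempty)
    (hAs : StrictConvex ℝ A) : (middleHedgehog A).Nonempty := by
  rw [middleHedgehog_eq_image hA hAne hAs]
  exact (NormedSpace.sphere_nonempty.2 zero_le_one).image _

end SupportPoint

section Continuity

variable {ι : Type*} {L : Filter ι} {A : ι → Set 𝔼} {A₀ : Set 𝔼}

theorem tendsto_supportPoint (hA₀ : IsCompact A₀) (hA₀ne : A₀.Nonempty)
    (hA₀s : StrictConvex ℝ A₀) (hA : ∀ i, IsCompact (A i)) (hAne : ∀ i, (A i).Nonempty)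
    (hd : Tendsto (fun i => hausdorffEDist (A i) A₀) L (𝓝 0)) {v : ι → 𝔼} {u : 𝔼}
    (hv : Tendsto v L (𝓝 u)) (hu : u ≠ 0) :
    Tendsto (fun i => supportPoint (A i) (v i)) L (𝓝 (supportPoint A₀ u)) := by
  have hface i := mem_face_iff.1 (supportPoint_mem_face (hA i) (hAne i) (v i))
  have hlim := tendsto_nhdsSet_isMaxOn_of_tendsto_hausdorffEDist
    (F := fun v => ⇑(innerSL ℝ v)) (by fun_prop) hv hA₀ hA hd
    (fun i => (hface i).1) (fun i => (hface i).2)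
  have hmax : {q ∈ A₀ | IsMaxOn (innerSL ℝ u) A₀ q} = {supportPoint A₀ u} := by
    rw [← face_eq_singleton_supportPoint hA₀ hA₀ne hA₀s hu]
    ext
    exact mem_face_iff.symm
  rwa [hmax, nhdsSet_singleton] at hlim

theorem tendsto_hedgehogPoint (hA₀ : IsCompact A₀) (hA₀ne : A₀.Nonempty)
    (hA₀s : StrictConvex ℝ A₀) (hA : ∀ i, IsCompact (A i)) (hAne : ∀ i, (A i).Nonempty)
    (hd : Tendsto (fun i => hausdorffEDist (A i) A₀) L (𝓝 0)) {v : ι → 𝔼} {u : 𝔼}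
    (hv : Tendsto v L (𝓝 u)) (hu : u ≠ 0) :
    Tendsto (fun i => hedgehogPoint (A i) (v i)) L (𝓝 (hedgehogPoint A₀ u)) :=
  ((tendsto_supportPoint hA₀ hA₀ne hA₀s hA hAne hd hv hu).add
    (tendsto_supportPoint hA₀ hA₀ne hA₀s hA hAne hd hv.neg (neg_ne_zero.2 hu))).const_smul _

theorem continuousAt_hedgehogPoint (hA₀ : IsCompact A₀) (hA₀ne : A₀.Nonempty)
    (hA₀s : StrictConvex ℝ A₀) {u : 𝔼} (hu : u ≠ 0) : ContinuousAt (hedgehogPoint A₀) u :=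
  tendsto_hedgehogPoint (A := fun _ => A₀) hA₀ hA₀ne hA₀s (fun _ => hA₀) (fun _ => hA₀ne)
    (by simp) tendsto_id hu

theorem isCompact_middleHedgehog (hA₀ : IsCompact A₀) (hA₀ne : A₀.Nonempty)
    (hA₀s : StrictConvex ℝ A₀) : IsCompact (middleHedgehog A₀) := by
  rw [middleHedgehog_eq_image hA₀ hA₀ne hA₀s]
  exact (isCompact_sphere 0 1).image_of_continuousOn fun u hu =>
    (continuousAt_hedgehogPoint hA₀ hA₀ne hA₀s
      (ne_zero_of_mem_unit_sphere ⟨u, hu⟩)).continuousWithinAt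

theorem tendsto_hausdorffEDist_middleHedgehog (hA₀ : IsCompact A₀) (hA₀ne : A₀.Nonempty)
    (hA₀s : StrictConvex ℝ A₀) (hA : ∀ i, IsCompact (A i)) (hAne : ∀ i, (A i).Nonempty)
    (hAs : ∀ i, StrictConvex ℝ (A i))
    (hd : Tendsto (fun i => hausdorffEDist (A i) A₀) L (𝓝 0)) :
    Tendsto (fun i => hausdorffEDist (middleHedgehog (A i)) (middleHedgehog A₀)) L (𝓝 0) := by
  have hunif : ∀ ε > 0, ∀ᶠ i in L, ∀ u ∈ sphere (0 : 𝔼) 1,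
      edist (hedgehogPoint (A i) u) (hedgehogPoint A₀ u) < ε := by
    intro ε hε
    have hlocal : ∀ u ∈ sphere (0 : 𝔼) 1, ∀ᶠ z : ι × 𝔼 in L ×ˢ 𝓝 u,
        edist (hedgehogPoint (A z.1) z.2) (hedgehogPoint A₀ z.2) < ε := by
      intro u hu
      have hu0 : u ≠ 0 := ne_zero_of_mem_unit_sphere ⟨u, hu⟩
      have hlim := (tendsto_hedgehogPoint (A := fun z : ι × 𝔼 => A z.1) hA₀ hA₀ne hA₀s
        (fun z => hA z.1) (fun z => hAne z.1) (hd.comp tendsto_fst) tendsto_snd hu0).edist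
        ((continuousAt_hedgehogPoint hA₀ hA₀ne hA₀s hu0).tendsto.comp tendsto_snd)
      rw [edist_self] at hlim
      exact (tendsto_order.1 hlim).2 ε hε
    have hnhdsSet : ∀ᶠ z : ι × 𝔼 in L ×ˢ 𝓝ˢ (sphere 0 1),
        edist (hedgehogPoint (A z.1) z.2) (hedgehogPoint A₀ z.2) < ε :=
      (isCompact_sphere 0 1).mem_prod_nhdsSet_of_forall hlocal
    exact hnhdsSet.curry.mono fun i hi => hi.self_of_nhdsSet
  refine ENNReal.tendsto_nhds_zero.2 fun ε hε => ?_
  filter_upwards [hunif ε hε] with i hi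
  rw [middleHedgehog_eq_image (hA i) (hAne i) (hAs i), middleHedgehog_eq_image hA₀ hA₀ne hA₀s]
  refine hausdorffEDist_le_of_mem_edist ?_ ?_
  · rintro _ ⟨u, hu, rfl⟩
    exact ⟨_, mem_image_of_mem _ hu, (hi u hu).le⟩
  · rintro _ ⟨u, hu, rfl⟩
    exact ⟨_, mem_image_of_mem _ hu, (edist_comm _ _).trans_le (hi u hu).le⟩

end Continuity

theorem StrictBody.tendsto_hausdorffEDist (K : StrictBody) :
    Tendsto (fun K' : StrictBody => hausdorffEDist (K'.1 : Set 𝔼) K.1) (𝓝 K) (𝓝 0) := by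
  have h := (tendsto_id (x := 𝓝 K)).edist (tendsto_const_nhds (x := K))
  rw [edist_self] at h
  simp_rw [ConvexBody.hausdorffEDist_coe]
  exact h

theorem lowerHemicontinuous_exposedPoints_convexHull_middleHedgehog :
    LowerHemicontinuous fun K : StrictBody =>
      (convexHull ℝ (middleHedgehog K.1)).exposedPoints ℝ := by
  refine lowerHemicontinuous_iff.2 fun K => lowerHemicontinuousAt_iff.2 fun U hU he => ?_
  have hc (K' : StrictBody) : IsCompact (K'.1 : Set 𝔼) := K'.1.isCompact
  have hne (K' : StrictBody) : (K'.1 : Set 𝔼).Nonempty := K'.1.nonempty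
  have hs (K' : StrictBody) : StrictConvex ℝ (K'.1 : Set 𝔼) := K'.2.2
  exact eventually_exposedPoints_convexHull_inter_nonempty
    (isCompact_middleHedgehog (hc K) (hne K) (hs K))
    (fun K' => isCompact_middleHedgehog (hc K') (hne K') (hs K'))
    (fun K' => middleHedgehog_nonempty_s16 (hc K') (hne K') (hs K'))
    (tendsto_hausdorffEDist_middleHedgehog (hc K) (hne K) (hs K) hc hne hs
      K.tendsto_hausdorffEDist) hU he

/-- For each `k`, the set of strictly convex bodies whose middle hedgehog's convex hull
has at most `k` exposed points is closed. -/
theorem Ak_closed (k : ℕ) :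
    IsClosed {K : StrictBody |
      (Set.exposedPoints ℝ
        (convexHull ℝ (middleHedgehog (K.1 : Set (EuclideanSpace ℝ (Fin 2)))))).Finite ∧
      (Set.exposedPoints ℝ
        (convexHull ℝ (middleHedgehog (K.1 : Set (EuclideanSpace ℝ (Fin 2)))))).ncard ≤ k} := by
  simpa only [preimage, mem_Iic, encard_le_coe_iff_finite_ncard_le] using
    lowerHemicontinuous_exposedPoints_convexHull_middleHedgehog.lowerSemicontinuous_encard
      |>.isClosed_preimage (k : ℕ∞)
end
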